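/- arXiv:2107.09382 — 3 statements merged into one kernel-verified Lean document; each statement's English description precedes it below -/
import Mathlib

section
/- Let Z = {z_1 < z_2 < ... < z_p} be the points selected by the greedy algorithm for terminal set R = Y in a connected convex bipartite graph G(X,Y) convex on X. Then for all k ≤ p, the subgraph of G induced on the closed neighborhood N[{z_1,...,z_k}] is connected. -/
/-!
Any two consecutive selected points `z_i < z_j` lie in a common interval, so chaining
through these intervals connects `N[{z_1, …, z_k}]`. The common interval is the last interval
`y c` (in processing order) marked when `z_j` is chosen: it contains some `z_k ≤ z_i`, so by
convexity it suffices that `z_j ≤ r (y c)`.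
If not, connectivity and convexity give an interval through `z_i` reaching beyond it, so
`c` lies strictly between `i` and `j` and was not selected; since `r (y c)` is not the last
point, the look-ahead rule says `r (y (c + 1))` is covered by a marked interval, hence
`c + 1` is not selected either, so it is marked — contradicting the choice of `c`.
-/

/-- `S` is a Steiner set for terminal set `R` in `G`: the subgraph induced on `R ∪ S`
is connected. -/
def IsSteinerSet {V : Type*} (G : SimpleGraph V) (R S : Set V) : Prop :=
  (G.induce (R ∪ S)).Connected

/-- `S` is a minimum Steiner set for terminal set `R` in `G`. -/
def IsMinSteinerSet {V : Type*} (G : SimpleGraph V) (R S : Set V) : Prop :=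
  IsSteinerSet G R S ∧ ∀ S' : Set V, IsSteinerSet G R S' → S.ncard ≤ S'.ncard

/-- The bipartite graph on `α ⊕ β` determined by the cross-adjacency relation `A`. -/
def biGraph {α β : Type*} (A : α → β → Prop) : SimpleGraph (α ⊕ β) where
  Adj u v := (∃ a b, u = .inl a ∧ v = .inr b ∧ A a b) ∨ (∃ a b, u = .inr b ∧ v = .inl a ∧ A a b)
  symm := by
    constructor
    rintro u v (⟨a,b,h1,h2,h3⟩|⟨a,b,h1,h2,h3⟩)
    · exact Or.inr ⟨a,b,h2,h1,h3⟩
    · exact Or.inl ⟨a,b,h2,h1,h3⟩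
  loopless := by constructor; rintro (a|b) (⟨x,y,h1,h2,_⟩|⟨x,y,h1,h2,_⟩) <;> simp_all

theorem SimpleGraph.connected_induce_image_union_adj {V ι : Type*} [Preorder ι]
    [WellFoundedLT ι] (G : SimpleGraph V) (f : ι → V) {I : Set ι} {i₀ : ι} (hi₀ : i₀ ∈ I)
    (hprev : ∀ i ∈ I, i ≠ i₀ → ∃ j ∈ I, j < i ∧ ∃ v, G.Adj (f i) v ∧ G.Adj (f j) v) :
    (G.induce (f '' I ∪ {v | ∃ u ∈ f '' I, G.Adj u v})).Connected := by
  set S := f '' I ∪ {v | ∃ u ∈ f '' I, G.Adj u v}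
  have hf : ∀ i ∈ I, f i ∈ S := fun i hi => Or.inl ⟨i, hi, rfl⟩
  have hadj : ∀ i (hi : i ∈ I) v (hv : G.Adj (f i) v),
      (G.induce S).Adj ⟨v, Or.inr ⟨_, ⟨i, hi, rfl⟩, hv⟩⟩ ⟨f i, hf i hi⟩ :=
    fun _ _ _ hv => hv.symm
  have hreach : ∀ i (hi : i ∈ I), (G.induce S).Reachable ⟨f i₀, hf i₀ hi₀⟩ ⟨f i, hf i hi⟩ := by
    intro i
    induction i using WellFoundedLT.induction with
    | _ i ih =>
      intro hi
      by_cases h : i = i₀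
      · subst h; rfl
      obtain ⟨j, hj, hji, v, hiv, hjv⟩ := hprev i hi h
      exact (ih j hji hj).trans ((hadj j hj v hjv).symm.reachable.trans (hadj i hi v hiv).reachable)
  refine (SimpleGraph.connected_iff_exists_forall_reachable _).2 ⟨⟨f i₀, hf i₀ hi₀⟩, ?_⟩
  rintro ⟨w, ⟨i, hi, rfl⟩ | ⟨u, ⟨i, hi, rfl⟩, hw⟩⟩
  · exact hreach i hi
  · exact (hreach i hi).trans (hadj i hi w hw).symm.reachable

lemma exists_greatest_lt_of_lt {ι : Type*} [LinearOrder ι] [Finite ι] {p : ι → Prop} {a i : ι}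
    (ha : p a) (hai : a < i) : ∃ j < i, p j ∧ ∀ k, j < k → k < i → ¬ p k := by
  obtain ⟨j, ⟨hji, hj⟩, hmax⟩ :=
    Set.exists_max_image {k | k < i ∧ p k} id (Set.toFinite _) ⟨a, hai, ha⟩
  exact ⟨j, hji, hj, fun k hjk hki hk => (hmax k ⟨hki, hk⟩).not_gt hjk⟩

section Greedy

variable {α Y : Type*} {A : α → Y → Prop} {n : ℕ} {r : Y → α} {y : Fin n → Y}
  {sel : Fin n → Prop}

variable (A r y sel) in
/-- The interval `y c` is already marked when the interval `y i` is processed. -/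
def Marked (i c : Fin n) : Prop :=
  ∃ j < i, sel j ∧ A (r (y j)) (y c)

lemma Marked.mono {i i' c : Fin n} (h : Marked A r y sel i c) (hii' : i ≤ i') :
    Marked A r y sel i' c :=
  let ⟨j, hj, hs, hA⟩ := h
  ⟨j, hj.trans_le hii', hs, hA⟩

variable [LinearOrder α]

lemma exists_interval_crossing_of_lt (hconn : (biGraph A).Connected)
    (hconv : ∀ b, {a | A a b}.OrdConnected) {x x' : α} (hx : x < x') :
    ∃ b, A x b ∧ ∃ a, x < a ∧ A a b := by
  by_contra! hno
  -- an edge leaving `P` would be an interval containing `x` and a point beyond `x`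
  let P : α ⊕ Y → Prop := Sum.elim (· ≤ x) fun b => ∀ a, A a b → a ≤ x
  have hP : ∀ u v, (biGraph A).Adj u v → (P u ↔ P v) := by
    have key : ∀ a b, A a b → (a ≤ x ↔ ∀ a', A a' b → a' ≤ x) := fun a b hab =>
      ⟨fun ha a' ha' => not_lt.1 fun hxa' =>
        hno b ((hconv b).out hab ha' ⟨ha, hxa'.le⟩) a' hxa' ha', fun h => h a hab⟩
    rintro u v (⟨a, b, rfl, rfl, hab⟩ | ⟨a, b, rfl, rfl, hab⟩)
    · exact key a b hab
    · exact (key a b hab).symm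
  obtain ⟨w⟩ := hconn.preconnected (.inl x) (.inl x')
  have hwalk : ∀ {u v} (_ : (biGraph A).Walk u v), P u ↔ P v := by
    intro u v w
    induction w with
    | nil => rfl
    | cons h _ ih => exact (hP _ _ h).trans ih
  exact hx.not_ge ((hwalk w).1 le_rfl)

lemma exists_marked_succ (hr : ∀ b, IsGreatest {a | A a b} (r b))
    (hsort : Monotone fun i => r (y i))
    (hmarked : ∀ k, ¬ sel k → Marked A r y sel k k)
    (hlook : ∀ k, ¬ sel k → ∀ x, r (y k) < x →
      ∃ c, Marked A r y sel k c ∧ ∃ h : (k : ℕ) + 1 < n, A (r (y ⟨k + 1, h⟩)) (y c))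
    {i j : Fin n} (hgap : ∀ k, i < k → k < j → ¬ sel k)
    (hbelow : ∀ c, Marked A r y sel j c → r (y c) < r (y j))
    {c : Fin n} (hc : Marked A r y sel j c) (hic : i < c) :
    ∃ h : (c : ℕ) + 1 < n, Marked A r y sel j ⟨c + 1, h⟩ := by
  have hcj : c < j := hsort.reflect_lt (hbelow c hc)
  obtain ⟨c', hc', h, hA⟩ := hlook c (hgap c hic hcj) _ (hbelow c hc)
  set d : Fin n := ⟨c + 1, h⟩
  have hdj : d < j :=
    hsort.reflect_lt (((hr _).2 hA).trans_lt (hbelow c' (hc'.mono hcj.le)))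
  have hid : i < d := hic.trans (Fin.lt_def.2 (Nat.lt_succ_self _))
  exact ⟨h, (hmarked d (hgap d hid hdj)).mono hdj.le⟩

lemma exists_marked_ge (hconn : (biGraph A).Connected) (hconv : ∀ b, {a | A a b}.OrdConnected)
    (hr : ∀ b, IsGreatest {a | A a b} (r b)) (hsort : Monotone fun i => r (y i))
    (hy : Function.Surjective y) (hmarked : ∀ k, ¬ sel k → Marked A r y sel k k)
    (hlook : ∀ k, ¬ sel k → ∀ x, r (y k) < x →
      ∃ c, Marked A r y sel k c ∧ ∃ h : (k : ℕ) + 1 < n, A (r (y ⟨k + 1, h⟩)) (y c))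
    {i j : Fin n} (hij : i < j) (hi : sel i) (hgap : ∀ k, i < k → k < j → ¬ sel k) :
    ∃ c, Marked A r y sel j c ∧ r (y j) ≤ r (y c) := by
  by_contra! hbelow
  have hmi : Marked A r y sel j i := ⟨i, hij, hi, (hr _).1⟩
  obtain ⟨c, hc, hmax⟩ :=
    Set.exists_max_image {c | Marked A r y sel j c} id (Set.toFinite _) ⟨i, hmi⟩
  obtain ⟨b, hib, a, hia, hab⟩ := exists_interval_crossing_of_lt hconn hconv (hbelow i hmi)
  obtain ⟨c', rfl⟩ := hy b
  have hic : i < c := hsort.reflect_lt <|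
    hia.trans_le (((hr _).2 hab).trans (hsort (hmax c' ⟨i, hij, hi, hib⟩)))
  obtain ⟨h, hd⟩ := exists_marked_succ hr hsort hmarked hlook hgap hbelow hc hic
  exact (hmax _ hd).not_gt (Fin.lt_def.2 (Nat.lt_succ_self _))

lemma exists_common_of_consecutive (hconn : (biGraph A).Connected)
    (hconv : ∀ b, {a | A a b}.OrdConnected) (hr : ∀ b, IsGreatest {a | A a b} (r b))
    (hsort : Monotone fun i => r (y i)) (hy : Function.Surjective y)
    (hmarked : ∀ k, ¬ sel k → Marked A r y sel k k)
    (hlook : ∀ k, ¬ sel k → ∀ x, r (y k) < x →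
      ∃ c, Marked A r y sel k c ∧ ∃ h : (k : ℕ) + 1 < n, A (r (y ⟨k + 1, h⟩)) (y c))
    {i j : Fin n} (hij : i < j) (hi : sel i) (hgap : ∀ k, i < k → k < j → ¬ sel k) :
    ∃ b, A (r (y i)) b ∧ A (r (y j)) b := by
  obtain ⟨c, ⟨k, hkj, hk, hkc⟩, hjc⟩ :=
    exists_marked_ge hconn hconv hr hsort hy hmarked hlook hij hi hgap
  have hki : r (y k) ≤ r (y i) := hsort (not_lt.1 fun hik => hgap k hik hkj hk)
  have hij' : r (y i) ≤ r (y j) := hsort hij.le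
  exact ⟨y c, (hconv _).out hkc (hr _).1 ⟨hki, hij'.trans hjc⟩,
    (hconv _).out hkc (hr _).1 ⟨hki.trans hij', hjc⟩⟩

end Greedy

/-- For `R = Y` in a connected convex bipartite graph, the greedy algorithm (process the
intervals `y 0, …, y (n-1)` by nondecreasing right endpoints `r`, selecting `r (y i)`
when interval `i` is unmarked, or when it is marked, `r (y i) ≠ x_m` and no marked
interval contains `r (y (i+1))`; marking all intervals hit by a selected point) selects
points `z_1 < … < z_p` such that for every prefix `{z_1, …, z_k}`, the subgraph induced
on the closed neighborhood `N[{z_1, …, z_k}]` is connected. -/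
theorem stmt11 {m : ℕ} (hm : 1 ≤ m) {Y : Type*} (A : Fin m → Y → Prop)
    (hconn : (biGraph A).Connected)
    (hconv : ∀ (y : Y) (a b c : Fin m), a ≤ b → b ≤ c → A a y → A c y → A b y)
    (r : Y → Fin m) (hr : ∀ y : Y, A (r y) y ∧ ∀ x : Fin m, A x y → x ≤ r y)
    {n : ℕ} (y : Fin n → Y) (hy : Function.Bijective y)
    (hsort : Monotone fun i => r (y i))
    (sel : Fin n → Prop)
    (hsel : ∀ i : Fin n, sel i ↔
      ((∀ j, j < i → sel j → ¬ A (r (y j)) (y i)) ∨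
       ((∃ j, j < i ∧ sel j ∧ A (r (y j)) (y i)) ∧ r (y i) ≠ ⟨m - 1, by omega⟩ ∧
        ∀ c : Fin n, (∃ j, j < i ∧ sel j ∧ A (r (y j)) (y c)) →
          ∀ (h : (i : ℕ) + 1 < n), ¬ A (r (y ⟨(i : ℕ) + 1, h⟩)) (y c)))) :
    ∀ t : Fin n,
      ((biGraph A).induce
        ({v | ∃ i, i ≤ t ∧ sel i ∧ v = Sum.inl (r (y i))} ∪
         {v | ∃ u ∈ {v' | ∃ i, i ≤ t ∧ sel i ∧ v' = Sum.inl (r (y i))},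
            (biGraph A).Adj u v})).Connected := by
  intro t
  have hsel0 : sel ⟨0, t.pos⟩ := (hsel _).2 (Or.inl fun j hj => (Nat.not_lt_zero _ hj).elim)
  have hmarked : ∀ k, ¬ sel k → Marked A r y sel k k := fun k hk => by
    by_contra h
    exact hk ((hsel k).2 (Or.inl fun j hj hs hA => h ⟨j, hj, hs, hA⟩))
  have hlook : ∀ k, ¬ sel k → ∀ x, r (y k) < x →
      ∃ c, Marked A r y sel k c ∧ ∃ h : (k : ℕ) + 1 < n, A (r (y ⟨k + 1, h⟩)) (y c) := by
    intro k hk x hx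
    have hlast : r (y k) ≠ ⟨m - 1, by omega⟩ :=
      (hx.trans_le (Fin.le_def.2 (Nat.le_sub_one_of_lt x.isLt))).ne
    by_contra h
    exact hk ((hsel k).2 (Or.inr ⟨hmarked k hk, hlast, fun c hc h' hA => h ⟨c, hc, h', hA⟩⟩))
  have hconv' : ∀ b, {a | A a b}.OrdConnected :=
    fun b => ⟨fun a ha c hc x hx => hconv b a x c hx.1 hx.2 ha hc⟩
  have hZ : {v | ∃ i, i ≤ t ∧ sel i ∧ v = Sum.inl (r (y i))} =
      (fun i => (Sum.inl (r (y i)) : Fin m ⊕ Y)) '' {i | i ≤ t ∧ sel i} := by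
    ext
    simp [eq_comm, and_assoc]
  rw [hZ]
  refine (biGraph A).connected_induce_image_union_adj _ ⟨Fin.le_def.2 (Nat.zero_le _), hsel0⟩ ?_
  rintro i ⟨hit, hi⟩ hi0
  obtain ⟨j, hji, hj, hgap⟩ :=
    exists_greatest_lt_of_lt hsel0 (lt_of_le_of_ne (Fin.le_def.2 (Nat.zero_le _)) (Ne.symm hi0))
  obtain ⟨b, hjb, hib⟩ :=
    exists_common_of_consecutive hconn hconv' hr hsort hy.2 hmarked hlook hji hj hgap
  exact ⟨j, ⟨hji.le.trans hit, hj⟩, hji, .inr b, Or.inl ⟨_, _, rfl, rfl, hib⟩,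
    Or.inl ⟨_, _, rfl, rfl, hjb⟩⟩
end

section
/- Reduction correctness (forward direction): let G be a graph with edges e_1,...,e_m and let G* be the reduction graph with vertices V_1 ∪ V_2 ∪ V_3 as in the vertex-cover-to-STREE construction. If V' ⊆ V(G) is a vertex cover of G with |V'| = k, then S = {x_i : v_i ∈ V'} is a Steiner set of size k in G* for the terminal set R = {y_{i1}, y_{i2} : 1 ≤ i ≤ m} ∪ {z_{11}}, i.e., G*[R ∪ S] is connected. -/
lemma SimpleGraph.Adj.reachable_induce {V : Type*} {G : SimpleGraph V} {s : Set V} {u v : V}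
    (h : G.Adj u v) (hu : u ∈ s) (hv : v ∈ s) : (G.induce s).Reachable ⟨u, hu⟩ ⟨v, hv⟩ :=
  SimpleGraph.Adj.reachable (G := G.induce s) h

/-- The graph `G*`: `Sum.inl i` is `x_i`, `Sum.inr (Sum.inl (j, t))` is `y_{j,t+1}` and
`Sum.inr (Sum.inr (j, t))` is `z_{j,t+1}`. -/
abbrev reductionGraph {n m : ℕ} (a b : Fin m → Fin n) :
    SimpleGraph (Fin n ⊕ ((Fin m × Fin 2) ⊕ (Fin m × Fin 2))) :=
  biGraph fun i x => Sum.elim (fun jt => a jt.1 = i ∨ b jt.1 = i) (fun _ => True) x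

namespace reductionGraph

variable {n m : ℕ} {a b : Fin m → Fin n}

lemma adj_x_z (i : Fin n) (jt : Fin m × Fin 2) :
    (reductionGraph a b).Adj (.inl i) (.inr (.inr jt)) :=
  Or.inl ⟨i, _, rfl, rfl, trivial⟩

lemma adj_y_x {jt : Fin m × Fin 2} {i : Fin n} (h : a jt.1 = i ∨ b jt.1 = i) :
    (reductionGraph a b).Adj (.inr (.inl jt)) (.inl i) :=
  Or.inr ⟨i, _, rfl, rfl, h⟩

/-- In `G*[R ∪ S]` every `x_i` is adjacent to the terminal `z`, and every `y_{j,t}` to the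
endpoint of `e_j` that lies in the cover; so all of `R ∪ S` lies within distance two of `z`. -/
theorem isSteinerSet (jt₀ : Fin m × Fin 2) {V' : Set (Fin n)}
    (hcover : ∀ j, a j ∈ V' ∨ b j ∈ V') :
    IsSteinerSet (reductionGraph a b)
      ({v | ∃ jt : Fin m × Fin 2, v = .inr (.inl jt)} ∪ {.inr (.inr jt₀)}) (Sum.inl '' V') := by
  set W := ({v | ∃ jt : Fin m × Fin 2, v = .inr (.inl jt)} ∪ {.inr (.inr jt₀)}) ∪
    (Sum.inl '' V' : Set (Fin n ⊕ ((Fin m × Fin 2) ⊕ (Fin m × Fin 2))))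
  have hz : .inr (.inr jt₀) ∈ W := .inl (.inr rfl)
  have x_reach : ∀ i (hi : .inl i ∈ W),
      ((reductionGraph a b).induce W).Reachable ⟨_, hi⟩ ⟨_, hz⟩ :=
    fun i hi => (adj_x_z i jt₀).reachable_induce hi hz
  refine (SimpleGraph.connected_iff_exists_forall_reachable _).2 ⟨⟨_, hz⟩, ?_⟩
  rintro ⟨v, (⟨jt, rfl⟩ | rfl) | ⟨i, hi, rfl⟩⟩
  · obtain ⟨i, hij, hi⟩ : ∃ i, (a jt.1 = i ∨ b jt.1 = i) ∧ i ∈ V' := by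
      rcases hcover jt.1 with h | h
      exacts [⟨_, .inl rfl, h⟩, ⟨_, .inr rfl, h⟩]
    exact (((adj_y_x hij).reachable_induce _ (.inr ⟨i, hi, rfl⟩)).trans (x_reach _ _)).symm
  · rfl
  · exact (x_reach i _).symm

end reductionGraph

theorem stmt15_general {n m : ℕ} (hm : 0 < m) (G : SimpleGraph (Fin n))
    (a b : Fin m → Fin n) (hedges : ∀ j, G.Adj (a j) (b j))
    (V' : Set (Fin n)) (hVC : ∀ v w : Fin n, G.Adj v w → v ∈ V' ∨ w ∈ V') :
    IsSteinerSet
      (biGraph (fun (i : Fin n) (x : (Fin m × Fin 2) ⊕ (Fin m × Fin 2)) =>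
        Sum.elim (fun jt => a jt.1 = i ∨ b jt.1 = i) (fun _ => True) x))
      ({v | ∃ jt : Fin m × Fin 2, v = Sum.inr (Sum.inl jt)} ∪
       {Sum.inr (Sum.inr (⟨0, hm⟩, 0))})
      (Sum.inl '' V') ∧
    (Sum.inl '' V' : Set (Fin n ⊕ ((Fin m × Fin 2) ⊕ (Fin m × Fin 2)))).ncard = V'.ncard :=
  ⟨reductionGraph.isSteinerSet _ fun j => hVC _ _ (hedges j),
    Set.ncard_image_of_injective _ Sum.inl_injective⟩

/-- Forward direction of the vertex-cover-to-STREE reduction: if `V'` is a vertex cover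
of `G`, then `S = {x_i : v_i ∈ V'}` is a Steiner set of the same size in `G*` for the
terminal set `R = {y_{j1}, y_{j2} : 1 ≤ j ≤ m} ∪ {z_{11}}`. -/
theorem stmt15 {n m : ℕ} (hm : 0 < m) (G : SimpleGraph (Fin n))
    (a b : Fin m → Fin n) (hedges : ∀ j, G.Adj (a j) (b j))
    (hall : ∀ v w : Fin n, G.Adj v w → ∃ j, (a j = v ∧ b j = w) ∨ (a j = w ∧ b j = v))
    (V' : Set (Fin n)) (hVC : ∀ v w : Fin n, G.Adj v w → v ∈ V' ∨ w ∈ V') :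
    IsSteinerSet
      (biGraph (fun (i : Fin n) (x : (Fin m × Fin 2) ⊕ (Fin m × Fin 2)) =>
        Sum.elim (fun jt => a jt.1 = i ∨ b jt.1 = i) (fun _ => True) x))
      ({v | ∃ jt : Fin m × Fin 2, v = Sum.inr (Sum.inl jt)} ∪
       {Sum.inr (Sum.inr (⟨0, hm⟩, 0))})
      (Sum.inl '' V') ∧
    (Sum.inl '' V' : Set (Fin n ⊕ ((Fin m × Fin 2) ⊕ (Fin m × Fin 2)))).ncard = V'.ncard :=
  stmt15_general hm G a b hedges V' hVC
end

section
/- Reduction correctness (reverse direction): with G* and R as in the vertex-cover reduction, if S ⊆ V(G*) with S ⊆ V_1 is a Steiner set of size k for R = {y_{i1}, y_{i2} : 1 ≤ i ≤ m} ∪ {z_{11}}, then V' = {v_i : x_i ∈ S} is a vertex cover of G of size at most k. -/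
/-
The terminal `y_{j1}` of an edge `e_j = {v_k, v_l}` is distinct from the terminal
`z_{11}`, so in the connected graph `G*[R ∪ S]` it has a neighbour. Its only neighbours in `G*`
are `x_k` and `x_l`, and the only vertices of `V_1` in `R ∪ S` are those of `S`; hence `S`
contains `x_k` or `x_l`.
-/

theorem IsSteinerSet.exists_adj_of_ne {V : Type*} {G : SimpleGraph V} {R S : Set V}
    (h : IsSteinerSet G R S) {u w : V} (hu : u ∈ R) (hw : w ∈ R) (huw : u ≠ w) :
    ∃ v ∈ R ∪ S, G.Adj u v := by
  obtain ⟨v, hv⟩ := (h.preconnected ⟨u, Or.inl hu⟩ ⟨w, Or.inl hw⟩).nonempty_neighborSet_left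
    (fun h ↦ huw (congrArg Subtype.val h))
  exact ⟨v, v.2, hv⟩

theorem biGraph_adj_inr_iff {α β : Type*} {A : α → β → Prop} {b : β} {v : α ⊕ β} :
    (biGraph A).Adj (.inr b) v ↔ ∃ a, v = .inl a ∧ A a b := by
  simp [biGraph]

theorem IsSteinerSet.exists_mem_adj_of_biGraph {α β : Type*} {A : α → β → Prop}
    {R : Set (α ⊕ β)} {S : Set α} (h : IsSteinerSet (biGraph A) R (Sum.inl '' S))
    (hR : R ⊆ Set.range Sum.inr) {b : β} {w : α ⊕ β} (hb : .inr b ∈ R) (hw : w ∈ R)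
    (hbw : .inr b ≠ w) : ∃ a ∈ S, A a b := by
  obtain ⟨v, hvRS, hadj⟩ := h.exists_adj_of_ne hb hw hbw
  obtain ⟨a, rfl, hab⟩ := biGraph_adj_inr_iff.mp hadj
  rcases hvRS with hvR | ⟨a', ha', heq⟩
  · obtain ⟨_, hcontra⟩ := hR hvR
    exact absurd hcontra Sum.inr_ne_inl
  · exact ⟨a, Sum.inl_injective heq ▸ ha', hab⟩

theorem stmt16_general {n m : ℕ} (hm : 0 < m) (G : SimpleGraph (Fin n))
    (a b : Fin m → Fin n)
    (hall : ∀ v w : Fin n, G.Adj v w → ∃ j, (a j = v ∧ b j = w) ∨ (a j = w ∧ b j = v))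
    (S : Set (Fin n))
    (hS : IsSteinerSet
      (biGraph (fun (i : Fin n) (x : (Fin m × Fin 2) ⊕ (Fin m × Fin 2)) =>
        Sum.elim (fun jt => a jt.1 = i ∨ b jt.1 = i) (fun _ => True) x))
      ({v | ∃ jt : Fin m × Fin 2, v = Sum.inr (Sum.inl jt)} ∪
       {Sum.inr (Sum.inr (⟨0, hm⟩, 0))})
      (Sum.inl '' S)) :
    (∀ v w : Fin n, G.Adj v w → v ∈ S ∨ w ∈ S) ∧
    S.ncard ≤ (Sum.inl '' S : Set (Fin n ⊕ ((Fin m × Fin 2) ⊕ (Fin m × Fin 2)))).ncard := by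
  refine ⟨fun v w hvw ↦ ?_, (Set.ncard_image_of_injective S Sum.inl_injective).ge⟩
  obtain ⟨j, hj⟩ := hall v w hvw
  obtain ⟨i, hi, hji⟩ := hS.exists_mem_adj_of_biGraph
    (by rintro _ (⟨_, rfl⟩ | rfl) <;> exact ⟨_, rfl⟩) (b := .inl (j, 0))
    (Or.inl ⟨(j, 0), rfl⟩) (Or.inr rfl) (by simp)
  rcases hj with ⟨rfl, rfl⟩ | ⟨rfl, rfl⟩ <;> rcases hji with rfl | rfl <;> tauto

/-- Reverse direction of the vertex-cover-to-STREE reduction: if `S ⊆ V₁` is a Steiner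
set for `R = {y_{j1}, y_{j2} : 1 ≤ j ≤ m} ∪ {z_{11}}` in `G*`, then the corresponding
vertices form a vertex cover of `G` of size at most `|S|`. -/
theorem stmt16 {n m : ℕ} (hm : 0 < m) (G : SimpleGraph (Fin n))
    (a b : Fin m → Fin n) (hedges : ∀ j, G.Adj (a j) (b j))
    (hall : ∀ v w : Fin n, G.Adj v w → ∃ j, (a j = v ∧ b j = w) ∨ (a j = w ∧ b j = v))
    (S : Set (Fin n))
    (hS : IsSteinerSet
      (biGraph (fun (i : Fin n) (x : (Fin m × Fin 2) ⊕ (Fin m × Fin 2)) =>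
        Sum.elim (fun jt => a jt.1 = i ∨ b jt.1 = i) (fun _ => True) x))
      ({v | ∃ jt : Fin m × Fin 2, v = Sum.inr (Sum.inl jt)} ∪
       {Sum.inr (Sum.inr (⟨0, hm⟩, 0))})
      (Sum.inl '' S)) :
    (∀ v w : Fin n, G.Adj v w → v ∈ S ∨ w ∈ S) ∧
    S.ncard ≤ (Sum.inl '' S : Set (Fin n ⊕ ((Fin m × Fin 2) ⊕ (Fin m × Fin 2)))).ncard :=
  stmt16_general hm G a b hall S hS
end
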